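/- arXiv:2004.08895 — 2 statements merged into one kernel-verified Lean document; each statement's English description precedes it below -/
import Mathlib

section
/- Let f(z) = ∑ aₙ zⁿ be analytic on the open unit disk with |f(z)| < 1 for all |z| < 1, and let a = |a₀|. Then |aₖ| ≤ 1 - a² for every k ≥ 1. -/
/-!
Averaging `f` over the rotations `z ↦ ζʲ z` by the `k`-th roots of unity kills every Taylor
coefficient whose index is not a multiple of `k`, so `(1/k) ∑_{j<k} f(ζʲ z) = H(zᵏ)` with
`H(w) = ∑ₙ a_{nk} wⁿ`. This `H` is again a holomorphic self-map of the unit disk, with `H(0) = a₀`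
and `H'(0) = aₖ`, and the Schwarz–Pick inequality `|H'(0)| ≤ 1 - |H(0)|²` (the Schwarz lemma for
`H` followed by the disk automorphism sending `H(0)` to `0`) is the claim.
-/

open Complex ComplexConjugate Metric Set Finset FormalMultilinearSeries
open scoped Nat NNReal ENNReal

theorem IsPrimitiveRoot.geom_sum_pow_eq_zero {R : Type*} [CommRing R] [IsDomain R] {ζ : R}
    {k m : ℕ} (hζ : IsPrimitiveRoot ζ k) (hm : ¬k ∣ m) : ∑ j ∈ range k, (ζ ^ m) ^ j = 0 := by
  have hne : ζ ^ m - 1 ≠ 0 := sub_ne_zero.2 fun h => hm ((hζ.pow_eq_one_iff_dvd m).1 h)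
  refine (mul_eq_zero.1 ?_).resolve_right hne
  rw [geom_sum_mul, ← pow_mul, mul_comm, pow_mul, hζ.pow_eq_one, one_pow, sub_self]

theorem IsPrimitiveRoot.hasSum_multisection {𝕜 : Type*} [Field 𝕜] [CharZero 𝕜]
    [TopologicalSpace 𝕜] [IsTopologicalRing 𝕜] {ζ u : 𝕜} {k : ℕ} (hζ : IsPrimitiveRoot ζ k)
    (hk : k ≠ 0) {c s : ℕ → 𝕜} (hs : ∀ j, HasSum (fun m => c m * (ζ ^ j * u) ^ m) (s j)) :
    HasSum (fun n => c (n * k) * (u ^ k) ^ n) ((∑ j ∈ range k, s j) / k) := by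
  have hsum : HasSum (fun m => c m * u ^ m * ∑ j ∈ range k, (ζ ^ m) ^ j) (∑ j ∈ range k, s j) := by
    convert hasSum_sum fun j _ => hs j using 2 with m
    rw [mul_sum]
    refine sum_congr rfl fun j _ => ?_
    rw [mul_pow, ← pow_mul, ← pow_mul, mul_comm m j]
    ring
  have hvanish : ∀ m ∉ Set.range (· * k), c m * u ^ m * ∑ j ∈ range k, (ζ ^ m) ^ j = 0 := by
    rintro m hm
    rw [hζ.geom_sum_pow_eq_zero fun ⟨n, hn⟩ => hm ⟨n, by rw [hn, mul_comm]⟩, mul_zero]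
  convert ((mul_left_injective₀ hk).hasSum_iff hvanish |>.2 hsum).div_const (k : 𝕜) using 2 with n
  have hk' : (k : 𝕜) ≠ 0 := Nat.cast_ne_zero.2 hk
  simp only [Function.comp_apply, pow_mul', hζ.pow_eq_one, one_pow, sum_const, card_range,
    nsmul_eq_mul, mul_one]
  field_simp

theorem FormalMultilinearSeries.le_radius_ofScalars_of_summable {𝕜 : Type*}
    [NontriviallyNormedField 𝕜] {c : ℕ → 𝕜} {z : 𝕜} (h : Summable fun n => c n * z ^ n) :
    (‖z‖₊ : ℝ≥0∞) ≤ (ofScalars 𝕜 c).radius :=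
  (ofScalars 𝕜 c).le_radius_of_tendsto (l := 0) <| by
    simpa [ofScalars_norm, norm_mul, norm_pow] using h.tendsto_atTop_zero.norm

theorem Complex.exists_norm_lt_one_pow_eq {w : ℂ} (hw : ‖w‖ < 1) {k : ℕ} (hk : k ≠ 0) :
    ∃ u : ℂ, ‖u‖ < 1 ∧ u ^ k = w := by
  obtain ⟨u, rfl⟩ := IsAlgClosed.exists_pow_nat_eq w (Nat.pos_of_ne_zero hk)
  rw [norm_pow, pow_lt_one_iff_of_nonneg (norm_nonneg u) hk] at hw
  exact ⟨u, hw, rfl⟩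

theorem norm_sum_div_card_lt {𝕜 ι : Type*} [RCLike 𝕜] {s : Finset ι} (hs : s.Nonempty)
    {g : ι → 𝕜} {r : ℝ} (h : ∀ i ∈ s, ‖g i‖ < r) : ‖(∑ i ∈ s, g i) / #s‖ < r := by
  rw [norm_div, RCLike.norm_natCast, div_lt_iff₀ (Nat.cast_pos.2 hs.card_pos)]
  calc ‖∑ i ∈ s, g i‖ ≤ ∑ i ∈ s, ‖g i‖ := norm_sum_le _ _
    _ < ∑ _i ∈ s, r := sum_lt_sum_of_nonempty hs h
    _ = r * #s := by rw [sum_const, nsmul_eq_mul, mul_comm]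

noncomputable def diskMobius (a w : ℂ) : ℂ := (w - a) / (1 - conj a * w)

theorem norm_one_sub_conj_mul_sq_sub_norm_sub_sq (a w : ℂ) :
    ‖1 - conj a * w‖ ^ 2 - ‖w - a‖ ^ 2 = (1 - ‖a‖ ^ 2) * (1 - ‖w‖ ^ 2) := by
  simp only [← normSq_eq_norm_sq, normSq_apply, sub_re, sub_im, mul_re, mul_im, conj_re, conj_im,
    one_re, one_im]
  ring

theorem one_sub_conj_mul_ne_zero {a w : ℂ} (ha : ‖a‖ < 1) (hw : ‖w‖ < 1) :
    1 - conj a * w ≠ 0 := by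
  intro h
  have h1 : ‖conj a * w‖ = 1 := by rw [← sub_eq_zero.1 h, norm_one]
  rw [norm_mul, RCLike.norm_conj] at h1
  nlinarith [norm_nonneg a, norm_nonneg w]

theorem norm_diskMobius_lt_one {a w : ℂ} (ha : ‖a‖ < 1) (hw : ‖w‖ < 1) :
    ‖diskMobius a w‖ < 1 := by
  rw [diskMobius, norm_div, div_lt_one (norm_pos_iff.2 (one_sub_conj_mul_ne_zero ha hw))]
  refine lt_of_pow_lt_pow_left₀ 2 (norm_nonneg _) ?_
  have := norm_one_sub_conj_mul_sq_sub_norm_sub_sq a w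
  nlinarith [mul_pos (sub_pos.2 (pow_lt_one₀ (norm_nonneg a) ha two_ne_zero))
    (sub_pos.2 (pow_lt_one₀ (norm_nonneg w) hw two_ne_zero))]

theorem differentiableOn_diskMobius {a : ℂ} (ha : ‖a‖ < 1) :
    DifferentiableOn ℂ (diskMobius a) (ball 0 1) := fun _ hw =>
  ((differentiableAt_id.sub_const a).div ((differentiableAt_const 1).sub
    (differentiableAt_id.const_mul (conj a)))
    (one_sub_conj_mul_ne_zero ha (mem_ball_zero_iff.1 hw))).differentiableWithinAt

theorem hasDerivAt_diskMobius_self {a : ℂ} (ha : ‖a‖ < 1) :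
    HasDerivAt (diskMobius a) (1 - conj a * a)⁻¹ a := by
  have hne := one_sub_conj_mul_ne_zero ha ha
  have h : HasDerivAt (fun w => (w - a) / (1 - conj a * w))
      ((1 * (1 - conj a * a) - (a - a) * (0 - conj a * 1)) / (1 - conj a * a) ^ 2) a :=
    ((hasDerivAt_id' a).sub_const a).div ((hasDerivAt_const a 1).sub
      ((hasDerivAt_id' a).const_mul (conj a))) hne
  rwa [sub_self, zero_mul, sub_zero, one_mul, sq, div_mul_cancel_left₀ hne] at h

theorem norm_deriv_le_one_sub_norm_sq {H : ℂ → ℂ} (hd : DifferentiableOn ℂ H (ball 0 1))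
    (hmaps : MapsTo H (ball 0 1) (ball 0 1)) : ‖deriv H 0‖ ≤ 1 - ‖H 0‖ ^ 2 := by
  set a := H 0
  have ha : ‖a‖ < 1 := mem_ball_zero_iff.1 (hmaps (mem_ball_self one_pos))
  have hpos : 0 < 1 - ‖a‖ ^ 2 := sub_pos.2 (pow_lt_one₀ (norm_nonneg a) ha two_ne_zero)
  have hderiv : deriv (diskMobius a ∘ H) 0 = (1 - conj a * a)⁻¹ * deriv H 0 :=
    ((hasDerivAt_diskMobius_self ha).comp 0
      (hd.differentiableAt (ball_mem_nhds 0 one_pos)).hasDerivAt).deriv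
  have hmaps' : MapsTo (diskMobius a ∘ H) (ball 0 1) (closedBall ((diskMobius a ∘ H) 0) 1) := by
    intro z hz
    rw [Function.comp_apply, diskMobius, sub_self, zero_div, mem_closedBall_zero_iff]
    exact (norm_diskMobius_lt_one ha (mem_ball_zero_iff.1 (hmaps hz))).le
  have hnorm : ‖1 - conj a * a‖ = 1 - ‖a‖ ^ 2 := by
    rw [conj_mul', ← ofReal_pow, ← ofReal_one, ← ofReal_sub, norm_real, Real.norm_of_nonneg hpos.le]
  have hle := norm_deriv_le_one_of_mapsTo_ball ((differentiableOn_diskMobius ha).comp hd hmaps)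
    hmaps' one_pos
  rwa [hderiv, norm_mul, norm_inv, hnorm, inv_mul_le_iff₀ hpos, mul_one] at hle

theorem exists_comp_pow_eq_multisection {f : ℂ → ℂ} (hd : DifferentiableOn ℂ f (ball 0 1))
    {ζ : ℂ} {k : ℕ} (hζ : IsPrimitiveRoot ζ k) (hk : k ≠ 0) :
    ∃ H : ℂ → ℂ, DifferentiableOn ℂ H (ball 0 1) ∧ H 0 = f 0 ∧
      deriv H 0 = iteratedDeriv k f 0 / k ! ∧
      ∀ u : ℂ, ‖u‖ < 1 → H (u ^ k) = (∑ j ∈ range k, f (ζ ^ j * u)) / k := by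
  set c : ℕ → ℂ := fun m => iteratedDeriv m f 0 / (m ! : ℂ)
  have htaylor : ∀ z : ℂ, ‖z‖ < 1 → HasSum (fun m => c m * z ^ m) (f z) := fun z hz =>
    (Complex.hasSum_taylorSeries_on_ball hd (mem_ball_zero_iff.2 hz)).congr_fun fun m => by
      simp only [c, sub_zero, smul_eq_mul]
      ring
  have hsection : ∀ u : ℂ, ‖u‖ < 1 →
      HasSum (fun n => c (n * k) * (u ^ k) ^ n) ((∑ j ∈ range k, f (ζ ^ j * u)) / k) :=
    fun u hu => hζ.hasSum_multisection hk fun j =>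
      htaylor _ (by rwa [norm_mul, norm_pow, hζ.norm'_eq_one hk, one_pow, one_mul])
  set q := ofScalars ℂ fun n => c (n * k)
  have hrad : 1 ≤ q.radius := by
    refine ENNReal.le_of_forall_nnreal_lt fun r hr => ?_
    obtain ⟨u, hu, hur⟩ := exists_norm_lt_one_pow_eq (w := (r : ℂ)) (by simpa using hr) hk
    have h := le_radius_ofScalars_of_summable (hsection u hu).summable
    rw [hur] at h
    simpa using h
  have hq : HasFPowerSeriesOnBall q.sum q 0 1 :=
    (q.hasFPowerSeriesOnBall (one_pos.trans_le hrad)).mono one_pos hrad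
  have hball : eball (0 : ℂ) 1 = ball 0 1 := by rw [← ENNReal.coe_one, eball_coe, NNReal.coe_one]
  refine ⟨q.sum, hball ▸ hq.differentiableOn, ?_, ?_, fun u hu => ?_⟩
  · simp [← hq.coeff_zero fun _ => 0, q, c]
  · simp [hq.hasFPowerSeriesAt.deriv, q, c]
  · have hmem : u ^ k ∈ eball (0 : ℂ) 1 := by
      rw [hball, mem_ball_zero_iff, norm_pow]
      exact pow_lt_one₀ (norm_nonneg u) hu hk
    have h := hq.hasSum hmem
    rw [zero_add] at h
    refine h.unique ?_
    simpa [q, ofScalars_apply_eq, mul_comm] using hsection u hu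

/-- Coefficient estimate `|aₖ| ≤ 1 - |a₀|²` for self-maps of the unit disk. -/
theorem coeff_estimate (f : ℂ → ℂ)
    (hd : DifferentiableOn ℂ f (Metric.ball (0 : ℂ) 1))
    (hb : ∀ z : ℂ, ‖z‖ < 1 → ‖f z‖ < 1) :
    ∀ k : ℕ, 1 ≤ k →
      ‖iteratedDeriv k f 0 / (Nat.factorial k : ℂ)‖ ≤ 1 - ‖f 0‖ ^ 2 := by
  intro k hk
  have hk0 : k ≠ 0 := Nat.one_le_iff_ne_zero.1 hk
  obtain ⟨ζ, hζ⟩ : ∃ ζ : ℂ, IsPrimitiveRoot ζ k := ⟨_, Complex.isPrimitiveRoot_exp k hk0⟩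
  obtain ⟨H, hHd, hH0, hH'0, hHsection⟩ := exists_comp_pow_eq_multisection hd hζ hk0
  have hmaps : MapsTo H (ball 0 1) (ball 0 1) := by
    intro w hw
    obtain ⟨u, hu, rfl⟩ := exists_norm_lt_one_pow_eq (mem_ball_zero_iff.1 hw) hk0
    have hterm : ∀ j ∈ range k, ‖f (ζ ^ j * u)‖ < 1 := fun j _ =>
      hb _ (by rwa [norm_mul, norm_pow, hζ.norm'_eq_one hk0, one_pow, one_mul])
    rw [mem_ball_zero_iff, hHsection u hu]
    simpa using norm_sum_div_card_lt (nonempty_range_iff.2 hk0) hterm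
  rw [← hH'0, ← hH0]
  exact norm_deriv_le_one_sub_norm_sq hHd hmaps
end

section
/- For a ∈ [0,1), r ∈ [0,1), m ≥ 1, and the function f(z) = (a+z)/(1+az), the extremal identity |f(rᵐ)| + rᵐ|f'(rᵐ)| + ∑_{k≥2}|aₖ|rᵏ = 1 + (1-a)·P/((1+a rᵐ)²(1-a r)) holds, where aₖ are the Taylor coefficients of f and P = (1 - a r)(a r²ᵐ + 2rᵐ - 1) + a r²(1+a)(1 + a rᵐ)². -/
/-!
Every Taylor coefficient of `f(z) = (a + z)/(1 + a z)` comes from the closed form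
`f⁽ⁿ⁺¹⁾(z) = (1 - a²)(-a)ⁿ (n+1)! / (1 + a z)ⁿ⁺²`, so `|aₖ| rᵏ` is a geometric sequence of ratio
`a r` and the tail `∑_{k≥2} |aₖ| rᵏ` sums to `(1 - a²) a r² / (1 - a r)`. For real `a, x ≥ 0` both
`f(x)` and `f'(x)` are nonnegative reals, and the identity becomes one between rational functions of
`a`, `r` and `x = rᵐ`.
-/

open Nat

noncomputable def moebius (a z : ℂ) : ℂ := (a + z) / (1 + a * z)

lemma hasDerivAt_moebius {a z : ℂ} (hz : 1 + a * z ≠ 0) :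
    HasDerivAt (moebius a) ((1 - a ^ 2) / (1 + a * z) ^ 2) z := by
  have hnum : HasDerivAt (fun w : ℂ => a + w) 1 z := (hasDerivAt_id z).const_add a
  have hden : HasDerivAt (fun w : ℂ => 1 + a * w) a z := by
    simpa using ((hasDerivAt_id z).const_mul a).const_add 1
  exact (hnum.fun_div hden hz).congr_deriv (by ring)

lemma hasDerivAt_const_div_one_add_mul_pow_succ (a c z : ℂ) (k : ℕ) (hz : 1 + a * z ≠ 0) :
    HasDerivAt (fun w => c / (1 + a * w) ^ (k + 1))
      (-((k + 1) * a * c) / (1 + a * z) ^ (k + 2)) z := by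
  have hden : HasDerivAt (fun w : ℂ => 1 + a * w) a z := by
    simpa using ((hasDerivAt_id z).const_mul a).const_add 1
  refine ((hasDerivAt_const z c).fun_div (hden.fun_pow (k + 1)) (pow_ne_zero _ hz)).congr_deriv ?_
  push_cast
  field_simp
  ring

lemma iteratedDeriv_succ_moebius {a : ℂ} (n : ℕ) {z : ℂ} (hz : 1 + a * z ≠ 0) :
    iteratedDeriv (n + 1) (moebius a) z =
      (1 - a ^ 2) * (-a) ^ n * (n + 1)! / (1 + a * z) ^ (n + 2) := by
  induction n generalizing z with
  | zero => simpa using (hasDerivAt_moebius hz).deriv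
  | succ n ih =>
    have hnear : iteratedDeriv (n + 1) (moebius a) =ᶠ[nhds z]
        fun w => (1 - a ^ 2) * (-a) ^ n * (n + 1)! / (1 + a * w) ^ (n + 2) := by
      have hopen : IsOpen {w : ℂ | 1 + a * w ≠ 0} := isOpen_ne.preimage (by fun_prop)
      filter_upwards [hopen.mem_nhds hz] with w hw using ih hw
    rw [iteratedDeriv_succ, hnear.deriv_eq,
      (hasDerivAt_const_div_one_add_mul_pow_succ a _ z (n + 1) hz).deriv, factorial_succ (n + 1)]
    push_cast
    ring

lemma moebius_taylorCoeff (a : ℂ) (n : ℕ) :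
    iteratedDeriv (n + 1) (moebius a) 0 / ((n + 1)! : ℂ) = (1 - a ^ 2) * (-a) ^ n := by
  rw [iteratedDeriv_succ_moebius n (by simp), mul_zero, add_zero, one_pow, div_one,
    mul_div_cancel_right₀ _ (mod_cast (n + 1).factorial_ne_zero)]

section Real

variable {a : ℝ}

lemma norm_moebius_ofReal (ha : 0 ≤ a) {x : ℝ} (hx : 0 ≤ x) :
    ‖moebius a x‖ = (a + x) / (1 + a * x) := by
  have hreal : moebius a x = (((a + x) / (1 + a * x) : ℝ) : ℂ) := by
    simp [moebius]
  rw [hreal, Complex.norm_real, Real.norm_of_nonneg (by positivity)]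

lemma norm_deriv_moebius_ofReal (ha0 : 0 ≤ a) (ha1 : a ≤ 1) {x : ℝ} (hx : 0 ≤ x) :
    ‖deriv (moebius a) x‖ = (1 - a ^ 2) / (1 + a * x) ^ 2 := by
  have hz : (1 : ℂ) + a * x ≠ 0 := by exact_mod_cast (by positivity : (1 + a * x : ℝ) ≠ 0)
  have hreal : deriv (moebius a) x = (((1 - a ^ 2) / (1 + a * x) ^ 2 : ℝ) : ℂ) := by
    rw [(hasDerivAt_moebius hz).deriv]
    push_cast
    rfl
  have hcoeff : 0 ≤ 1 - a ^ 2 := by nlinarith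
  rw [hreal, Complex.norm_real, Real.norm_of_nonneg (div_nonneg hcoeff (by positivity))]

lemma tsum_norm_moebius_taylorCoeff_mul_pow (ha0 : 0 ≤ a) (ha1 : a ≤ 1) {r : ℝ} (hr : 0 ≤ r)
    (har : a * r < 1) :
    ∑' k : ℕ, ‖iteratedDeriv (k + 2) (moebius a) 0 / ((k + 2)! : ℂ)‖ * r ^ (k + 2) =
      (1 - a ^ 2) * a * r ^ 2 / (1 - a * r) := by
  have hterm (k : ℕ) : ‖iteratedDeriv (k + 2) (moebius a) 0 / ((k + 2)! : ℂ)‖ * r ^ (k + 2) =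
      (1 - a ^ 2) * a * r ^ 2 * (a * r) ^ k := by
    have hreal : (1 - (a : ℂ) ^ 2) * (-a) ^ (k + 1) = (((1 - a ^ 2) * (-a) ^ (k + 1) : ℝ) : ℂ) := by
      push_cast
      rfl
    have hcoeff : 0 ≤ 1 - a ^ 2 := by nlinarith
    rw [moebius_taylorCoeff, hreal, Complex.norm_real, Real.norm_eq_abs, abs_mul, abs_pow, abs_neg,
      abs_of_nonneg hcoeff, abs_of_nonneg ha0]
    ring
  rw [tsum_congr hterm, tsum_mul_left, tsum_geometric_of_lt_one (by positivity) har]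
  field_simp

end Real

theorem moebius_extremal_identity_general (a r : ℝ) (ha : a ∈ Set.Ico (0 : ℝ) 1)
    (hr : r ∈ Set.Ico (0 : ℝ) 1) (m : ℕ) :
    let f : ℂ → ℂ := fun z => ((a : ℂ) + z) / (1 + (a : ℂ) * z)
    ‖f ((r : ℂ) ^ m)‖ + r ^ m * ‖deriv f ((r : ℂ) ^ m)‖ +
      (∑' k : ℕ, ‖iteratedDeriv (k + 2) f 0 / (Nat.factorial (k + 2) : ℂ)‖ * r ^ (k + 2)) =
    1 + (1 - a) *
        ((1 - a * r) * (a * r ^ (2 * m) + 2 * r ^ m - 1) +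
          a * r ^ 2 * (1 + a) * (1 + a * r ^ m) ^ 2) /
      ((1 + a * r ^ m) ^ 2 * (1 - a * r)) := by
  intro f
  obtain ⟨ha0, ha1⟩ := ha
  obtain ⟨hr0, hr1⟩ := hr
  have har : a * r < 1 := by nlinarith
  have hrm : (0 : ℝ) ≤ r ^ m := by positivity
  have hf : f = moebius a := rfl
  rw [hf, ← Complex.ofReal_pow, norm_moebius_ofReal ha0 hrm,
    norm_deriv_moebius_ofReal ha0 ha1.le hrm,
    tsum_norm_moebius_taylorCoeff_mul_pow ha0 ha1.le hr0 har, mul_comm 2 m, pow_mul]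
  have hden : 1 - a * r ≠ 0 := by linarith
  field_simp
  ring

/-- Extremal identity for the Möbius function `f(z) = (a+z)/(1+az)`:
`|f(rᵐ)| + rᵐ|f'(rᵐ)| + ∑_{k≥2}|aₖ|rᵏ = 1 + (1-a)P/((1+a rᵐ)²(1-a r))`. -/
theorem moebius_extremal_identity (a r : ℝ) (ha : a ∈ Set.Ico (0 : ℝ) 1)
    (hr : r ∈ Set.Ico (0 : ℝ) 1) (m : ℕ) (hm : 1 ≤ m) :
    let f : ℂ → ℂ := fun z => ((a : ℂ) + z) / (1 + (a : ℂ) * z)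
    ‖f ((r : ℂ) ^ m)‖ + r ^ m * ‖deriv f ((r : ℂ) ^ m)‖ +
      (∑' k : ℕ, ‖iteratedDeriv (k + 2) f 0 / (Nat.factorial (k + 2) : ℂ)‖ * r ^ (k + 2)) =
    1 + (1 - a) *
        ((1 - a * r) * (a * r ^ (2 * m) + 2 * r ^ m - 1) +
          a * r ^ 2 * (1 + a) * (1 + a * r ^ m) ^ 2) /
      ((1 + a * r ^ m) ^ 2 * (1 - a * r)) :=
  moebius_extremal_identity_general a r ha hr m
end
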